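/- arXiv:2204.07941 — 6 statements merged into one kernel-verified Lean document; each statement's English description precedes it below -/
import Mathlib

section
/- Let X be an infinite Hausdorff topological space, 𝓑 a bornology on X, and 𝒰 an open 𝓑-γ-cover of X. Then the family S(𝒰) consists of bounded upper semicontinuous functions and S(𝒰) is upper sequentially dense in ⟨USC*(X), τ_𝓑⟩. -/
open Set Filter Topology

/-- A bornology in the sense of the paper: a proper ideal of subsets of `X`
(nonempty, downward closed, closed under binary unions, `X ∉ 𝓑`) whose union is `X`. -/
def IsPBornology {X : Type*} (𝓑 : Set (Set X)) : Prop :=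
  𝓑.Nonempty ∧ (∀ A B : Set X, A ⊆ B → B ∈ 𝓑 → A ∈ 𝓑) ∧
    (∀ A B : Set X, A ∈ 𝓑 → B ∈ 𝓑 → A ∪ B ∈ 𝓑) ∧
    (Set.univ : Set X) ∉ 𝓑 ∧ ⋃₀ 𝓑 = Set.univ

/-- `USC*(X)`: bounded upper semicontinuous real functions on `X`. -/
def USCb (X : Type*) [TopologicalSpace X] : Set (X → ℝ) :=
  {f | (∀ a : ℝ, IsOpen {x | f x < a}) ∧ ∃ M : ℝ, ∀ x, |f x| ≤ M}

/-- `C*(X)`: bounded continuous real functions on `X`. -/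
def Cb (X : Type*) [TopologicalSpace X] : Set (X → ℝ) :=
  {f | Continuous f ∧ ∃ M : ℝ, ∀ x, |f x| ≤ M}

/-- `C(X)`: continuous real functions on `X`. -/
def ContFns (X : Type*) [TopologicalSpace X] : Set (X → ℝ) := {f | Continuous f}

/-- Basic `τ_𝓑`-neighborhood `N_{B,ε}(h)`. -/
def Nbhd {X : Type*} (B : Set X) (ε : ℝ) (h : X → ℝ) : Set (X → ℝ) :=
  {f | ∀ x ∈ B, |h x - f x| < ε}

/-- The topology `τ_𝓑` on `ℝ^X` of uniform convergence on members of `𝓑`. -/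
def tauB {X : Type*} (𝓑 : Set (Set X)) : TopologicalSpace (X → ℝ) :=
  TopologicalSpace.generateFrom
    {S | ∃ (h : X → ℝ) (B : Set X) (ε : ℝ), B ∈ 𝓑 ∧ 0 < ε ∧ S = Nbhd B ε h}

/-- The ball `𝔹(B,V)` about `B` of radius an entourage `V`. -/
def UBall {X : Type*} (B : Set X) (V : Set (X × X)) : Set X :=
  {x | ∃ y ∈ B, (x, y) ∈ V}

/-- Basic `τ_𝓑ˢ`-neighborhood `Nˢ_{B,ε}(h)`. -/
def NbhdS {X : Type*} [UniformSpace X] (B : Set X) (ε : ℝ) (h : X → ℝ) : Set (X → ℝ) :=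
  {f | ∃ V ∈ uniformity X, ∀ x ∈ UBall B V, |h x - f x| < ε}

/-- The topology `τ_𝓑ˢ` on `ℝ^X`. -/
def tauBs {X : Type*} [UniformSpace X] (𝓑 : Set (Set X)) : TopologicalSpace (X → ℝ) :=
  TopologicalSpace.generateFrom
    {S | ∃ (h : X → ℝ) (B : Set X) (ε : ℝ), B ∈ 𝓑 ∧ 0 < ε ∧ S = NbhdS B ε h}

/-- The selection principle `S₁(𝒜, ℬ)`. -/
def S1 {α : Type*} (𝒜 ℬ : Set (Set α)) : Prop :=
  ∀ u : ℕ → Set α, (∀ n, u n ∈ 𝒜) → ∃ s : ℕ → α, (∀ n, s n ∈ u n) ∧ Set.range s ∈ ℬ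

/-- `𝒰` is an open cover of `X`. -/
def IsOCover {X : Type*} [TopologicalSpace X] (𝒰 : Set (Set X)) : Prop :=
  (∀ U ∈ 𝒰, IsOpen U) ∧ ⋃₀ 𝒰 = Set.univ

/-- `𝒪(X)`: all open covers of `X`. -/
def OCovers (X : Type*) [TopologicalSpace X] : Set (Set (Set X)) := {𝒰 | IsOCover 𝒰}

/-- `Ω_𝓑(X)`: all open `𝓑`-ω-covers of `X`. -/
def BOmegaCovers {X : Type*} [TopologicalSpace X] (𝓑 : Set (Set X)) : Set (Set (Set X)) :=
  {𝒰 | IsOCover 𝒰 ∧ Set.univ ∉ 𝒰 ∧ ∀ B ∈ 𝓑, ∃ U ∈ 𝒰, B ⊆ U}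

/-- `Γ_𝓑(X)`: all open `𝓑`-γ-covers of `X`. -/
def BGammaCovers {X : Type*} [TopologicalSpace X] (𝓑 : Set (Set X)) : Set (Set (Set X)) :=
  {𝒰 | IsOCover 𝒰 ∧ 𝒰.Infinite ∧ ∀ B ∈ 𝓑, {U ∈ 𝒰 | ¬ B ⊆ U}.Finite}

/-- `Ω^s_𝓑(X)`: all open strong `𝓑`-ω-covers of `X`. -/
def BOmegaSCovers {X : Type*} [UniformSpace X] (𝓑 : Set (Set X)) : Set (Set (Set X)) :=
  {𝒰 | IsOCover 𝒰 ∧ Set.univ ∉ 𝒰 ∧ ∀ B ∈ 𝓑, ∃ U ∈ 𝒰, ∃ V ∈ uniformity X, UBall B V ⊆ U}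

/-- `Γ^s_𝓑(X)`: all open strong `𝓑`-γ-covers of `X`. -/
def BGammaSCovers {X : Type*} [UniformSpace X] (𝓑 : Set (Set X)) : Set (Set (Set X)) :=
  {𝒰 | IsOCover 𝒰 ∧ 𝒰.Infinite ∧
    ∀ B ∈ 𝓑, {U ∈ 𝒰 | ¬ ∃ V ∈ uniformity X, UBall B V ⊆ U}.Finite}

/-- `B` and the complement of `U` are functionally separated. -/
def FunSep {X : Type*} [TopologicalSpace X] (B U : Set X) : Prop :=
  ∃ f : X → ℝ, Continuous f ∧ (∀ x ∈ B, f x = 0) ∧ ∀ x ∈ Uᶜ, f x = 1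

/-- `Ω_{𝓑^f}(X)`: all open functionally separated `𝓑`-ω-covers of `X`. -/
def BfOmegaCovers {X : Type*} [TopologicalSpace X] (𝓑 : Set (Set X)) : Set (Set (Set X)) :=
  {𝒰 | IsOCover 𝒰 ∧ ∀ B ∈ 𝓑, ∃ U ∈ 𝒰, FunSep B U}

/-- `Γ_{𝓑^f}(X)`: all open functionally separated `𝓑`-γ-covers of `X`. -/
def BfGammaCovers {X : Type*} [TopologicalSpace X] (𝓑 : Set (Set X)) : Set (Set (Set X)) :=
  {𝒰 | IsOCover 𝒰 ∧ 𝒰.Infinite ∧ ∀ B ∈ 𝓑, {U ∈ 𝒰 | ¬ FunSep B U}.Finite}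

/-- The bornology `Fin` of finite subsets. -/
def FinB (X : Type*) : Set (Set X) := {B | B.Finite}

/-- `𝒟(H)`: subsets of `H` dense in `H` w.r.t. the topology `t`. -/
def DFam {X : Type*} (t : TopologicalSpace (X → ℝ)) (H : Set (X → ℝ)) : Set (Set (X → ℝ)) :=
  {F | F ⊆ H ∧ H ⊆ @closure _ t F}

/-- `𝒮(H)`: subsets of `H` sequentially dense in `H` w.r.t. the topology `t`. -/
def SFam {X : Type*} (t : TopologicalSpace (X → ℝ)) (H : Set (X → ℝ)) : Set (Set (X → ℝ)) :=
  {F | F ⊆ H ∧ ∀ h ∈ H, ∃ s : ℕ → X → ℝ, (∀ n, s n ∈ F) ∧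
    Filter.Tendsto s Filter.atTop (@nhds _ t h)}

/-- `𝒫(H)`: pointwise dense subsets of `H`. -/
def PFam {X : Type*} (H : Set (X → ℝ)) : Set (Set (X → ℝ)) :=
  {F | F ⊆ H ∧ ∀ h ∈ H, ∀ x : X, h x ∈ closure {y : ℝ | ∃ f ∈ F, f x = y}}

/-- `𝒟↑(H)`: upper dense subsets of `H` w.r.t. the topology `t`. -/
def UpperDenseFam {X : Type*} (t : TopologicalSpace (X → ℝ)) (H : Set (X → ℝ)) :
    Set (Set (X → ℝ)) :=
  {F | F ⊆ H ∧ ∀ f ∈ H, {h | h ∈ H ∧ f ≤ h} ⊆ @closure _ t {h | h ∈ F ∧ f ≤ h ∧ h - f ∈ H}}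

/-- `𝒮↑(H)`: upper sequentially dense subsets of `H` w.r.t. the topology `t`. -/
def UpperSeqDenseFam {X : Type*} (t : TopologicalSpace (X → ℝ)) (H : Set (X → ℝ)) :
    Set (Set (X → ℝ)) :=
  {F | F ⊆ H ∧ ∀ f ∈ H, ∃ s : ℕ → X → ℝ,
    (∀ n, s n ∈ F ∧ f ≤ s n ∧ s n - f ∈ H) ∧
    Filter.Tendsto s Filter.atTop (@nhds _ t f)}

/-- `H` is separable w.r.t. the topology `t`. -/
def SeparableIn {X : Type*} (t : TopologicalSpace (X → ℝ)) (H : Set (X → ℝ)) : Prop :=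
  ∃ D : Set (X → ℝ), D.Countable ∧ D ∈ DFam t H

/-- `H` is sequentially separable w.r.t. the topology `t`. -/
def SeqSeparableIn {X : Type*} (t : TopologicalSpace (X → ℝ)) (H : Set (X → ℝ)) : Prop :=
  ∃ D : Set (X → ℝ), D.Countable ∧ D ∈ SFam t H

/-- Property `(𝒪_h)`. -/
def PropO {X : Type*} (F : Set (X → ℝ)) (h : X → ℝ) : Prop :=
  ∀ x : X, h x ∈ closure {y : ℝ | ∃ f ∈ F, f x = y}

/-- Property `(Ω_h)_𝓑`. -/
def PropOmega {X : Type*} (𝓑 : Set (Set X)) (F : Set (X → ℝ)) (h : X → ℝ) : Prop :=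
  h ∉ F ∧ h ∈ @closure _ (tauB 𝓑) F

/-- Property `(Γ_h)_𝓑`. -/
def PropGamma {X : Type*} (𝓑 : Set (Set X)) (F : Set (X → ℝ)) (h : X → ℝ) : Prop :=
  F.Infinite ∧ ∀ ε : ℝ, 0 < ε → ∀ B ∈ 𝓑, {f ∈ F | ∃ x ∈ B, ε ≤ |f x - h x|}.Finite

/-- `𝒪_{h,𝓑}(H)`. -/
def OFam {X : Type*} (h : X → ℝ) (H : Set (X → ℝ)) : Set (Set (X → ℝ)) :=
  {F | F ⊆ H ∧ PropO F h ∧ ∀ f ∈ F, h ≤ f ∧ f - h ∈ H}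

/-- `Ω_{h,𝓑}(H)`. -/
def OmegaFam {X : Type*} (𝓑 : Set (Set X)) (h : X → ℝ) (H : Set (X → ℝ)) :
    Set (Set (X → ℝ)) :=
  {F | F ⊆ H ∧ PropOmega 𝓑 F h ∧ ∀ f ∈ F, h ≤ f ∧ f - h ∈ H}

/-- `Γ_{h,𝓑}(H)`. -/
def GammaFam {X : Type*} (𝓑 : Set (Set X)) (h : X → ℝ) (H : Set (X → ℝ)) :
    Set (Set (X → ℝ)) :=
  {F | F ⊆ H ∧ PropGamma 𝓑 F h ∧ ∀ f ∈ F, h ≤ f ∧ f - h ∈ H}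

open Classical in
/-- The function `f_{U,g}`. -/
noncomputable def fUg {X : Type*} (U : Set X) (g : X → ℝ) : X → ℝ :=
  fun x => if x ∈ U then g x else g x + 1 + ⨆ y, |g y|

/-- The family `S(𝒰)`. -/
def SU {X : Type*} [TopologicalSpace X] (𝒰 : Set (Set X)) : Set (X → ℝ) :=
  {f | ∃ U ∈ 𝒰, ∃ g ∈ USCb X, f = fUg U g}

/-- `Ψ_𝓑(X)` for `Ψ = 𝒪, Ω, Γ` coded by `0, 1, 2 : Fin 3`. -/
def covFam (X : Type*) [TopologicalSpace X] (𝓑 : Set (Set X)) (i : Fin 3) :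
    Set (Set (Set X)) :=
  if i = 0 then OCovers X else if i = 1 then BOmegaCovers 𝓑 else BGammaCovers 𝓑

/-- `Ψ_{h,𝓑}(H)` for `Ψ = 𝒪, Ω, Γ` coded by `0, 1, 2 : Fin 3`. -/
def funFam {X : Type*} (𝓑 : Set (Set X)) (h : X → ℝ) (H : Set (X → ℝ)) (i : Fin 3) :
    Set (Set (X → ℝ)) :=
  if i = 0 then OFam h H else if i = 1 then OmegaFam 𝓑 h H else GammaFam 𝓑 h H

/-- `H` (as a subspace w.r.t. the topology `t`) is Fréchet–Urysohn. -/
def FUOn {X : Type*} (t : TopologicalSpace (X → ℝ)) (H : Set (X → ℝ)) : Prop :=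
  ∀ A : Set (X → ℝ), A ⊆ H → ∀ y ∈ H, y ∈ @closure _ t A →
    ∃ s : ℕ → X → ℝ, (∀ n, s n ∈ A) ∧ Filter.Tendsto s Filter.atTop (@nhds _ t y)

/-- `H` (as a subspace w.r.t. the topology `t`) is strictly Fréchet–Urysohn. -/
def SFUOn {X : Type*} (t : TopologicalSpace (X → ℝ)) (H : Set (X → ℝ)) : Prop :=
  ∀ y ∈ H, ∀ A : ℕ → Set (X → ℝ), (∀ n, A n ⊆ H) → (∀ n, y ∈ @closure _ t (A n)) →
    ∃ s : ℕ → X → ℝ, (∀ n, s n ∈ A n) ∧ Filter.Tendsto s Filter.atTop (@nhds _ t y)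

open Classical in
lemma fUg_mem_USCb {X : Type*} [TopologicalSpace X] {U : Set X} (hU : IsOpen U)
    {g : X → ℝ} (hg : g ∈ USCb X) : fUg U g ∈ USCb X := by
  obtain ⟨hopen, M, hM⟩ := hg
  have hsup : 0 ≤ ⨆ y, |g y| := Real.iSup_nonneg fun y => abs_nonneg _
  have hbdd : BddAbove (Set.range fun y => |g y|) := ⟨M, by rintro _ ⟨y, rfl⟩; exact hM y⟩
  constructor
  · intro a
    have he : {x | fUg U g x < a}
        = {x | g x < a - (1 + ⨆ y, |g y|)} ∪ (U ∩ {x | g x < a}) := by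
      ext x
      simp only [fUg, Set.mem_setOf_eq, Set.mem_union, Set.mem_inter_iff]
      by_cases hx : x ∈ U
      · simp only [hx, if_true, true_and]
        constructor
        · intro h; exact Or.inr h
        · rintro (h | h)
          · linarith
          · exact h
      · simp only [hx, if_false]
        constructor
        · intro h; exact Or.inl (by linarith)
        · rintro (h | h)
          · linarith
          · exact h.1.elim
    rw [he]
    exact (hopen _).union (hU.inter (hopen a))
  · refine ⟨M + (1 + ⨆ y, |g y|), fun x => ?_⟩
    simp only [fUg]
    by_cases hx : x ∈ U
    · simp only [hx, if_true]
      have := hM x; linarith [abs_nonneg (g x)]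
    · simp only [hx, if_false]
      have h2 : (0:ℝ) ≤ 1 + ⨆ y, |g y| := by linarith
      have key : g x + 1 + (⨆ y, |g y|) = g x + (1 + ⨆ y, |g y|) := by ring
      rw [key]
      refine (abs_add_le _ _).trans ?_
      rw [abs_of_nonneg h2]
      have := hM x; linarith

/-- If `X` is an infinite Hausdorff space, `𝓑` a bornology on `X` and `𝒰` an
open `𝓑`-γ-cover of `X`, then `S(𝒰) ⊆ USC*(X)` and `S(𝒰)` is upper sequentially dense in
`⟨USC*(X), τ_𝓑⟩`. -/
theorem statement1 {X : Type*} [TopologicalSpace X] [T2Space X] [Infinite X]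
    (𝓑 : Set (Set X)) (h𝓑 : IsPBornology 𝓑)
    (𝒰 : Set (Set X)) (h𝒰 : 𝒰 ∈ BGammaCovers 𝓑) :
    SU 𝒰 ⊆ USCb X ∧ SU 𝒰 ∈ UpperSeqDenseFam (tauB 𝓑) (USCb X) := by
  classical
  obtain ⟨⟨hopen𝒰, hcov⟩, hinf, hgam⟩ := h𝒰
  have hsub : SU 𝒰 ⊆ USCb X := by
    rintro f ⟨U, hU, g, hg, rfl⟩
    exact fUg_mem_USCb (hopen𝒰 U hU) hg
  refine ⟨hsub, hsub, ?_⟩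
  intro f hf
  obtain ⟨hfopen, M, hM⟩ := hf
  -- an injective enumeration of infinitely many members of 𝒰
  let e : ℕ ↪ 𝒰 := hinf.natEmbedding 𝒰
  let u : ℕ → Set X := fun n => (e n : Set X)
  have hu𝒰 : ∀ n, u n ∈ 𝒰 := fun n => (e n).2
  have huinj : Function.Injective u := fun n m h => e.injective (Subtype.ext h)
  have hsup : 0 ≤ ⨆ y, |f y| := Real.iSup_nonneg fun y => abs_nonneg _
  set c : ℝ := 1 + ⨆ y, |f y| with hc
  have hcpos : 0 < c := by simp only [hc]; linarith
  refine ⟨fun n => fUg (u n) f, fun n => ?_, ?_⟩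
  · refine ⟨⟨u n, hu𝒰 n, f, ⟨hfopen, M, hM⟩, rfl⟩, ?_, ?_⟩
    · intro x
      simp only [fUg]
      by_cases hx : x ∈ u n
      · simp [hx]
      · simp only [hx, if_false]; linarith
    · have hd : fUg (u n) f - f = fun x => if x ∈ u n then 0 else c := by
        funext x
        simp only [Pi.sub_apply, fUg]
        by_cases hx : x ∈ u n <;> simp [hx, hc] <;> ring
      rw [hd]
      constructor
      · intro a
        have he : {x | (if x ∈ u n then (0:ℝ) else c) < a}
            = if c < a then Set.univ else if 0 < a then u n else ∅ := by
          ext x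
          by_cases hca : c < a <;> by_cases h0a : 0 < a <;>
            by_cases hx : x ∈ u n <;>
            simp [hca, h0a, hx] <;> linarith
        rw [he]
        split
        · exact isOpen_univ
        · split
          · exact hopen𝒰 _ (hu𝒰 n)
          · exact isOpen_empty
      · refine ⟨c, fun x => ?_⟩
        by_cases hx : x ∈ u n <;> simp [hx, le_of_lt hcpos, abs_of_nonneg (le_of_lt hcpos)]
  · -- convergence in tauB
    rw [tauB, TopologicalSpace.nhds_generateFrom]
    rw [tendsto_iInf]
    rintro S
    rw [tendsto_iInf]
    rintro ⟨hfS, h, B, ε, hB, hε, rfl⟩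
    rw [tendsto_principal]
    -- eventually B ⊆ u n
    have hfin : {n | ¬ B ⊆ u n}.Finite := by
      have h1 : {n | ¬ B ⊆ u n} ⊆ u ⁻¹' {U ∈ 𝒰 | ¬ B ⊆ U} := by
        intro n hn
        exact ⟨hu𝒰 n, hn⟩
      exact ((hgam B hB).preimage huinj.injOn).subset h1
    have hev : ∀ᶠ n in atTop, B ⊆ u n := by
      obtain ⟨N, hN⟩ := (hfin.bddAbove)
      refine eventually_atTop.2 ⟨N + 1, fun n hn => ?_⟩
      by_contra hcon
      exact absurd (hN hcon) (by omega)
    filter_upwards [hev] with n hBn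
    intro x hx
    have : fUg (u n) f x = f x := by simp [fUg, hBn hx]
    rw [this]
    simpa using hfS x hx
end

section
/- Let X be a metric space with its metric uniformity 𝒲, 𝓑 a bornology on X, and 𝒰 an open strong 𝓑-γ-cover (𝓑-γˢ-cover) of X. Then the family S(𝒰) consists of bounded upper semicontinuous functions and S(𝒰) is upper sequentially dense in ⟨USC*(X), τ_𝓑ˢ⟩. -/
open Set Filter Topology

/-- If `X` is a metric space (with its metric uniformity), `𝓑` a bornology on
`X` and `𝒰` an open strong `𝓑`-γ-cover of `X`, then `S(𝒰) ⊆ USC*(X)` and `S(𝒰)` is upper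
sequentially dense in `⟨USC*(X), τ_𝓑ˢ⟩`. -/
theorem statement3 {X : Type*} [MetricSpace X]
    (𝓑 : Set (Set X)) (h𝓑 : IsPBornology 𝓑)
    (𝒰 : Set (Set X)) (h𝒰 : 𝒰 ∈ BGammaSCovers 𝓑) :
    SU 𝒰 ⊆ USCb X ∧ SU 𝒰 ∈ UpperSeqDenseFam (tauBs 𝓑) (USCb X) := by
  obtain ⟨⟨hopen, hcov⟩, hinf, hfin⟩ := h𝒰
  -- Part 1: `S(𝒰) ⊆ USC*(X)`
  have hSU : SU 𝒰 ⊆ USCb X := by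
    rintro f ⟨U, hU, g, ⟨husc, M, hM⟩, rfl⟩
    have hc : 0 ≤ ⨆ y, |g y| := Real.iSup_nonneg fun y => abs_nonneg _
    constructor
    · intro a
      have hset : {x | fUg U g x < a} =
          {x | g x < a - (1 + ⨆ y, |g y|)} ∪ ({x | g x < a} ∩ U) := by
        ext x
        simp only [fUg, mem_setOf_eq, mem_union, mem_inter_iff]
        by_cases hx : x ∈ U
        · simp only [if_pos hx]
          constructor
          · intro h; exact Or.inr ⟨h, hx⟩
          · rintro (h | ⟨h, _⟩) <;> linarith
        · simp only [if_neg hx]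
          constructor
          · intro h; exact Or.inl (by linarith)
          · rintro (h | ⟨_, h⟩)
            · linarith
            · exact absurd h hx
      rw [hset]
      exact (husc _).union ((husc _).inter (hopen U hU))
    · refine ⟨M + 1 + ⨆ y, |g y|, fun x => ?_⟩
      have h1 := hM x
      have h2 := abs_le.mp h1
      by_cases hx : x ∈ U
      · simp only [fUg, if_pos hx]
        rw [abs_le]; constructor <;> linarith
      · simp only [fUg, if_neg hx]
        rw [abs_le]; constructor <;> linarith
  refine ⟨hSU, hSU, fun f hf => ?_⟩
  obtain ⟨husc, M, hM⟩ := hf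
  have hc : 0 ≤ ⨆ y, |f y| := Real.iSup_nonneg fun y => abs_nonneg _
  -- choose an injective sequence of members of `𝒰`
  let e : ℕ ↪ 𝒰 := hinf.natEmbedding
  set u : ℕ → Set X := fun n => (e n : Set X) with hu
  have hu𝒰 : ∀ n, u n ∈ 𝒰 := fun n => (e n).2
  have huinj : Function.Injective u :=
    Subtype.val_injective.comp e.injective
  refine ⟨fun n => fUg (u n) f, fun n => ?_, ?_⟩
  · refine ⟨⟨u n, hu𝒰 n, f, ⟨husc, M, hM⟩, rfl⟩, fun x => ?_, ?_⟩
    · simp only [fUg]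
      by_cases hx : x ∈ u n
      · simp [hx]
      · simp only [if_neg hx]; linarith
    · constructor
      · intro a
        by_cases h1 : 1 + (⨆ y, |f y|) < a
        · have : {x | (fUg (u n) f - f) x < a} = univ :=
            eq_univ_of_forall fun x => by
              simp only [Pi.sub_apply, fUg, mem_setOf_eq]
              by_cases hx : x ∈ u n
              · simp only [if_pos hx]; linarith
              · simp only [if_neg hx]; linarith
          rw [this]; exact isOpen_univ
        · by_cases h2 : 0 < a
          · have : {x | (fUg (u n) f - f) x < a} = u n := by
              ext x
              simp only [Pi.sub_apply, fUg, mem_setOf_eq]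
              by_cases hx : x ∈ u n
              · simp only [if_pos hx]
                constructor
                · intro _; exact hx
                · intro _; linarith
              · simp only [if_neg hx]
                constructor
                · intro h; exact absurd (by linarith : a ≤ 1 + (⨆ y, |f y|)) (by linarith)
                · intro h; exact absurd h hx
            rw [this]; exact hopen _ (hu𝒰 n)
          · have : {x | (fUg (u n) f - f) x < a} = ∅ := by
              ext x
              simp only [Pi.sub_apply, fUg, mem_setOf_eq, mem_empty_iff_false, iff_false,
                not_lt]
              by_cases hx : x ∈ u n
              · simp only [if_pos hx]; linarith
              · simp only [if_neg hx]; linarith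
            rw [this]; exact isOpen_empty
      · refine ⟨1 + ⨆ y, |f y|, fun x => ?_⟩
        simp only [Pi.sub_apply, fUg]
        by_cases hx : x ∈ u n
        · simp only [if_pos hx]
          rw [abs_le]; constructor <;> linarith
        · simp only [if_neg hx]
          rw [abs_le]; constructor <;> linarith
  · -- convergence in `τ_𝓑ˢ`
    rw [tauBs, TopologicalSpace.nhds_generateFrom]
    rw [Filter.tendsto_iInf]
    intro S
    rw [Filter.tendsto_iInf]
    rintro ⟨hfS, h, B, ε, hB, hε, rfl⟩
    rw [Filter.tendsto_principal]
    obtain ⟨V₀, hV₀, hV₀f⟩ := hfS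
    have hbadfin : {n : ℕ | ¬ ∃ V ∈ uniformity X, UBall B V ⊆ u n}.Finite := by
      have hpre : {n : ℕ | ¬ ∃ V ∈ uniformity X, UBall B V ⊆ u n} ⊆
          u ⁻¹' {U ∈ 𝒰 | ¬ ∃ V ∈ uniformity X, UBall B V ⊆ U} := by
        intro n hn
        exact ⟨hu𝒰 n, hn⟩
      exact ((hfin B hB).preimage huinj.injOn).subset hpre
    have hev : ∀ᶠ n in atTop, ∃ V ∈ uniformity X, UBall B V ⊆ u n := by
      rw [← Nat.cofinite_eq_atTop]
      simpa using hbadfin.compl_mem_cofinite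
    filter_upwards [hev] with n hn
    obtain ⟨V₁, hV₁, hsub⟩ := hn
    refine ⟨V₀ ∩ V₁, Filter.inter_mem hV₀ hV₁, fun x hx => ?_⟩
    obtain ⟨y, hy, hxy⟩ := hx
    have hx0 : x ∈ UBall B V₀ := ⟨y, hy, hxy.1⟩
    have hx1 : x ∈ u n := hsub ⟨y, hy, hxy.2⟩
    have : fUg (u n) f x = f x := if_pos hx1
    rw [this]
    exact hV₀f x hx0
end

section
/- For every infinite Hausdorff topological space X and every bornology 𝓑 on X, the space ⟨USC*(X), τ_𝓑⟩ does not satisfy the selection principle S₁(𝒫(USC*(X)), 𝒟(USC*(X))). -/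
open Set Filter Topology

/-!
Pick two points `a ≠ b` and let `h` be the indicator of the closed point `{b}`, an upper
semicontinuous function. Since `{a, b}` is bounded, `N = N_{{a,b},1/2}(h)` is a `τ_𝓑`-open
neighbourhood of `h`, and it contains no constant function because `h` jumps by `1` between `a`
and `b`. Hence `USC*(X) \ N` still contains every constant, so it is pointwise dense, yet no
subset of it can be `τ_𝓑`-dense; selecting from the constant sequence of this family defeats
`S₁(𝒫, 𝒟)`.
-/

section USCb

variable {X : Type*} [TopologicalSpace X]

theorem mem_USCb_of_upperSemicontinuous {f : X → ℝ} (hf : UpperSemicontinuous f)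
    (hbdd : ∃ M : ℝ, ∀ x, |f x| ≤ M) : f ∈ USCb X :=
  ⟨upperSemicontinuous_iff_isOpen_preimage.mp hf, hbdd⟩

theorem const_mem_USCb (c : ℝ) : (fun _ : X => c) ∈ USCb X :=
  mem_USCb_of_upperSemicontinuous upperSemicontinuous_const ⟨|c|, fun _ => le_rfl⟩

theorem indicator_singleton_one_mem_USCb [T1Space X] (b : X) :
    ({b} : Set X).indicator 1 ∈ USCb X := by
  refine mem_USCb_of_upperSemicontinuous
    (isClosed_singleton.upperSemicontinuous_indicator zero_le_one) ⟨1, fun x => ?_⟩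
  by_cases hx : x = b <;> simp [hx]

end USCb

theorem IsPBornology.singleton_mem {X : Type*} {𝓑 : Set (Set X)} (h𝓑 : IsPBornology 𝓑)
    (x : X) : {x} ∈ 𝓑 := by
  obtain ⟨B, hB, hxB⟩ : x ∈ ⋃₀ 𝓑 := h𝓑.2.2.2.2 ▸ mem_univ x
  exact h𝓑.2.1 {x} B (singleton_subset_iff.mpr hxB) hB

theorem IsPBornology.pair_mem {X : Type*} {𝓑 : Set (Set X)} (h𝓑 : IsPBornology 𝓑)
    (x y : X) : {x, y} ∈ 𝓑 :=
  singleton_union ▸ h𝓑.2.2.1 {x} {y} (h𝓑.singleton_mem x) (h𝓑.singleton_mem y)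

theorem isOpen_Nbhd {X : Type*} {𝓑 : Set (Set X)} {B : Set X} {ε : ℝ} (hB : B ∈ 𝓑)
    (hε : 0 < ε) (h : X → ℝ) : IsOpen[tauB 𝓑] (Nbhd B ε h) :=
  TopologicalSpace.isOpen_generateFrom_of_mem ⟨h, B, ε, hB, hε, rfl⟩

theorem const_notMem_Nbhd {X : Type*} {B : Set X} {ε : ℝ} {h : X → ℝ} {x y : X}
    (hx : x ∈ B) (hy : y ∈ B) (hjump : 2 * ε ≤ |h x - h y|) (c : ℝ) :
    (fun _ : X => c) ∉ Nbhd B ε h := fun hc => by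
  have hxc : |h x - c| < ε := hc x hx
  have hyc : |h y - c| < ε := hc y hy
  have htri := abs_sub_le (h x) c (h y)
  rw [abs_sub_comm c] at htri
  linarith

theorem diff_mem_PFam {X : Type*} {H N : Set (X → ℝ)} (hconst : ∀ c : ℝ, (fun _ => c) ∈ H)
    (hN : ∀ c : ℝ, (fun _ => c) ∉ N) : H \ N ∈ PFam H :=
  ⟨sdiff_subset, fun _ _ _ => subset_closure ⟨fun _ => _, ⟨hconst _, hN _⟩, rfl⟩⟩

theorem not_S1_DFam_of_not_subset_closure {X : Type*} {t : TopologicalSpace (X → ℝ)}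
    {H 𝒰 : Set (X → ℝ)} {𝒜 : Set (Set (X → ℝ))} (h𝒰 : 𝒰 ∈ 𝒜)
    (hnd : ¬ H ⊆ closure[t] 𝒰) : ¬ S1 𝒜 (DFam t H) := fun hS1 => by
  obtain ⟨s, hs, hdense⟩ := hS1 (fun _ => 𝒰) (fun _ => h𝒰)
  exact hnd (hdense.2.trans (closure_mono (range_subset_iff.mpr hs)))

/-- For every infinite Hausdorff space `X` and bornology `𝓑` on `X`,
`⟨USC*(X), τ_𝓑⟩` does not satisfy `S₁(𝒫(USC*(X)), 𝒟(USC*(X)))`. -/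
theorem statement6 {X : Type*} [TopologicalSpace X] [T2Space X] [Infinite X]
    (𝓑 : Set (Set X)) (h𝓑 : IsPBornology 𝓑) :
    ¬ S1 (PFam (USCb X)) (DFam (tauB 𝓑) (USCb X)) := by
  obtain ⟨a, b, hab⟩ := exists_pair_ne X
  set h : X → ℝ := ({b} : Set X).indicator 1
  set N := Nbhd {a, b} (1 / 2) h
  have hN : IsOpen[tauB 𝓑] N := isOpen_Nbhd (h𝓑.pair_mem a b) one_half_pos h
  have hconst : ∀ c : ℝ, (fun _ => c) ∉ N :=
    const_notMem_Nbhd (x := a) (y := b) (by simp) (by simp) (by simp [h, hab])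
  refine not_S1_DFam_of_not_subset_closure (diff_mem_PFam const_mem_USCb hconst) fun hsub => ?_
  have hhN : h ∈ N := fun x _ => by simp
  have hdisj : Disjoint (closure[tauB 𝓑] (USCb X \ N)) N :=
    @Disjoint.closure_left _ (tauB 𝓑) _ _ disjoint_sdiff_left hN
  exact hdisj.notMem_of_mem_right hhN (hsub (indicator_singleton_one_mem_USCb b))
end

section
/- For every infinite Hausdorff topological space X and every bornology 𝓑 on X, the space ⟨USC*(X), τ_𝓑⟩ does not satisfy the selection principle S₁(𝒫(USC*(X)), 𝒮(USC*(X))). -/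
open Set Filter Topology

/-- τ_𝓑 convergence implies pointwise convergence, since singletons belong to 𝓑. -/
lemma tauB_tendsto_pointwise {X : Type*} (𝓑 : Set (Set X)) (h𝓑 : IsPBornology 𝓑)
    (t : ℕ → X → ℝ) (h : X → ℝ)
    (ht : Filter.Tendsto t Filter.atTop (@nhds _ (tauB 𝓑) h)) (x : X) :
    Filter.Tendsto (fun n => t n x) Filter.atTop (nhds (h x)) := by
  obtain ⟨-, hdown, -, -, hunion⟩ := h𝓑
  have hx : x ∈ ⋃₀ 𝓑 := by rw [hunion]; trivial
  obtain ⟨B, hB, hxB⟩ := hx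
  rw [Metric.tendsto_atTop]
  intro ε hε
  have hopen : @IsOpen _ (tauB 𝓑) (Nbhd B ε h) :=
    TopologicalSpace.isOpen_generateFrom_of_mem ⟨h, B, ε, hB, hε, rfl⟩
  have hmem : h ∈ Nbhd B ε h := by intro y _; simp [hε]
  have hnhds : Nbhd B ε h ∈ @nhds _ (tauB 𝓑) h := by
    letI : TopologicalSpace (X → ℝ) := tauB 𝓑
    exact hopen.mem_nhds hmem
  have := ht hnhds
  rw [Filter.mem_map, Filter.mem_atTop_sets] at this
  obtain ⟨N, hN⟩ := this
  refine ⟨N, fun n hn => ?_⟩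
  have := hN n hn x hxB
  rw [Real.dist_eq, abs_sub_comm]
  exact this

/-- For every infinite Hausdorff space `X` and bornology `𝓑` on `X`,
`⟨USC*(X), τ_𝓑⟩` does not satisfy `S₁(𝒫(USC*(X)), 𝒮(USC*(X)))`. -/
theorem statement10 {X : Type*} [TopologicalSpace X] [T2Space X] [Infinite X]
    (𝓑 : Set (Set X)) (h𝓑 : IsPBornology 𝓑) :
    ¬ S1 (PFam (USCb X)) (SFam (tauB 𝓑) (USCb X)) := by
  classical
  intro hS1
  -- the family of constant functions
  set F : Set (X → ℝ) := {f | ∃ c : ℝ, f = fun _ => c} with hF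
  have hFP : F ∈ PFam (USCb X) := by
    constructor
    · rintro f ⟨c, rfl⟩
      refine ⟨fun a => ?_, ⟨|c|, fun x => le_refl _⟩⟩
      by_cases hc : c < a
      · have : {x : X | c < a} = Set.univ := by ext; simp [hc]
        rw [this]; exact isOpen_univ
      · have : {x : X | c < a} = ∅ := by ext; simp [hc]
        rw [this]; exact isOpen_empty
    · intro h _ x
      have : {y : ℝ | ∃ f ∈ F, f x = y} = Set.univ := by
        ext y; simp only [Set.mem_setOf_eq, Set.mem_univ, iff_true]
        exact ⟨fun _ => y, ⟨y, rfl⟩, rfl⟩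
      rw [this, closure_univ]; trivial
  obtain ⟨s, hs, hsF, hseq⟩ := hS1 (fun _ => F) (fun _ => hFP)
  -- a non-constant bounded usc function
  obtain ⟨x₀, x₁, hne⟩ : ∃ x₀ x₁ : X, x₀ ≠ x₁ := by
    obtain ⟨x₀, x₁, hne⟩ := Infinite.instNontrivial X
    exact ⟨x₀, x₁, hne⟩
  set h : X → ℝ := fun x => if x = x₀ then (1 : ℝ) else 0 with hdef
  have hUSC : h ∈ USCb X := by
    constructor
    · intro a
      by_cases h1 : 1 < a
      · have : {x : X | h x < a} = Set.univ := by
          ext x; simp only [Set.mem_setOf_eq, Set.mem_univ, iff_true, hdef]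
          split <;> [exact h1; linarith]
        rw [this]; exact isOpen_univ
      · by_cases h0 : a ≤ 0
        · have : {x : X | h x < a} = ∅ := by
            ext x; simp only [Set.mem_setOf_eq, Set.mem_empty_iff_false, iff_false, hdef,
              not_lt]
            split <;> linarith
          rw [this]; exact isOpen_empty
        · have : {x : X | h x < a} = {x₀}ᶜ := by
            ext x
            simp only [Set.mem_setOf_eq, Set.mem_compl_iff, Set.mem_singleton_iff, hdef]
            constructor
            · intro hx hxx; rw [if_pos hxx] at hx; exact h1 hx
            · intro hx; rw [if_neg hx]; linarith
          rw [this]; exact isOpen_compl_singleton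
    · exact ⟨1, fun x => by simp only [hdef]; split <;> simp⟩
  obtain ⟨t, htF, htconv⟩ := hseq h hUSC
  -- each t n is constant
  have htc : ∀ n, ∃ c : ℝ, t n = fun _ => c := by
    intro n
    obtain ⟨m, hm⟩ := htF n
    obtain ⟨c, hc⟩ := hs m
    exact ⟨c, hm ▸ hc⟩
  choose c hc using htc
  have h0 : Filter.Tendsto c Filter.atTop (nhds 1) := by
    have := tauB_tendsto_pointwise 𝓑 h𝓑 t h htconv x₀
    simpa [hc, hdef] using this
  have h1 : Filter.Tendsto c Filter.atTop (nhds 0) := by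
    have := tauB_tendsto_pointwise 𝓑 h𝓑 t h htconv x₁
    simpa [hc, hdef, hne.symm] using this
  exact one_ne_zero (tendsto_nhds_unique h0 h1)
end

section
/- No infinite Hausdorff topological space X with a bornology 𝓑 on X satisfies the covering property S₁(𝒪(X), Ω_𝓑(X)), and no such space satisfies S₁(𝒪(X), Γ_𝓑(X)). -/
open Set Filter Topology

/-- No infinite Hausdorff space `X` with a bornology `𝓑` satisfies
`S₁(𝒪(X), Ω_𝓑(X))`, nor `S₁(𝒪(X), Γ_𝓑(X))`. -/
theorem statement11 {X : Type*} [TopologicalSpace X] [T2Space X] [Infinite X]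
    (𝓑 : Set (Set X)) (h𝓑 : IsPBornology 𝓑) :
    ¬ S1 (OCovers X) (BOmegaCovers 𝓑) ∧ ¬ S1 (OCovers X) (BGammaCovers 𝓑) := by
  have hcov : ({(Set.univ : Set X)} : Set (Set X)) ∈ OCovers X := by
    constructor
    · rintro U rfl; exact isOpen_univ
    · simp
  constructor
  · intro h
    obtain ⟨s, hs, _, huniv, _⟩ := h (fun _ => {Set.univ}) (fun _ => hcov)
    exact huniv ⟨0, hs 0⟩
  · intro h
    obtain ⟨s, hs, _, hinf, _⟩ := h (fun _ => {Set.univ}) (fun _ => hcov)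
    refine hinf (Set.Finite.subset (Set.finite_singleton Set.univ) ?_)
    rintro _ ⟨n, rfl⟩; exact hs n
end

section
/- Let X be a perfectly normal topological space. Then every bounded upper semicontinuous function f : X → ℝ is the pointwise limit of a non-increasing sequence of bounded continuous functions; in particular, C*(X) is sequentially dense in ⟨USC*(X), τ_p⟩. -/
open Set Filter Topology

/-!
For a rational `r`, perfect normality makes the closed set `{f ≤ r}` of a lower semicontinuous
`f ≥ c` the zero set of a continuous `φ ≥ 0`, and the bounded continuous functions
`min r (c + m φ)` lie below `f` and reach `r` wherever `f > r`. These countably many functions,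
indexed by `(r, m) ∈ ℚ × ℕ`, have `f` as pointwise supremum, so their running maxima increase
to `f`. An upper semicontinuous `f` is handled through `-f`.
-/

open scoped BoundedContinuousFunction

section

variable {X : Type*} [TopologicalSpace X]

lemma BoundedContinuousFunction.partialSups_apply {β : Type*} [NormedAddCommGroup β] [Lattice β]
    [HasSolidNorm β] [IsOrderedAddMonoid β] (g : ℕ → X →ᵇ β) (n : ℕ) (x : X) :
    partialSups g n x = partialSups (g · x) n := by
  induction n with
  | zero => simp
  | succ n ih => simp [ih]

lemma isLUB_range_partialSups_iff {α ι : Type*} [SemilatticeSup α] [Preorder ι]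
    [LocallyFiniteOrderBot ι] {u : ι → α} {a : α} :
    IsLUB (range (partialSups u)) a ↔ IsLUB (range u) a := by
  rw [IsLUB, IsLUB, upperBounds_range_partialSups]

lemma LowerSemicontinuous.exists_boundedContinuous_le_of_lt [PerfectlyNormalSpace X] {f : X → ℝ}
    (hf : LowerSemicontinuous f) {c : ℝ} (hc : ∀ x, c ≤ f x) (r : ℝ) :
    ∃ g : ℕ → X →ᵇ ℝ, (∀ m, ⇑(g m) ≤ f) ∧ ∀ x, r < f x → ∃ m, r ≤ g m x := by
  obtain ⟨φ, hzero, hφ01⟩ := perfectlyNormalSpace_iff_forall_isClosed_preimage_zero.1 ‹_›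
    _ (hf.isClosed_preimage r)
  have hcont (m : ℕ) : Continuous fun x => min r (c + m * φ x) := by fun_prop
  have hbound (m : ℕ) (x : X) : ‖min r (c + m * φ x)‖ ≤ |r| + |c| := by
    have : 0 ≤ m * φ x := mul_nonneg m.cast_nonneg (hφ01 x).1
    rw [Real.norm_eq_abs, abs_le]
    constructor
    · exact le_min (by linarith [neg_abs_le r, abs_nonneg c])
        (by linarith [neg_abs_le c, abs_nonneg r])
    · exact (min_le_left _ _).trans (by linarith [le_abs_self r, abs_nonneg c])
  refine ⟨fun m => .ofNormedAddCommGroup _ (hcont m) _ (hbound m), fun m x => ?_, fun x hx => ?_⟩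
  · by_cases hx : f x ≤ r
    · have : φ x = 0 := by simpa using (Set.ext_iff.1 hzero x).1 hx
      simpa [this] using (min_le_right _ _).trans (hc x)
    · exact (min_le_left _ _).trans (not_le.1 hx).le
  · have hpos : 0 < φ x := lt_of_le_of_ne (hφ01 x).1 fun h =>
      hx.not_ge <| (Set.ext_iff.1 hzero x).2 (by simp [← h])
    obtain ⟨m, hm⟩ := exists_nat_ge ((r - c) / φ x)
    refine ⟨m, le_min le_rfl ?_⟩
    have := (div_le_iff₀ hpos).1 hm
    linarith

lemma LowerSemicontinuous.exists_seq_boundedContinuous_isLUB [PerfectlyNormalSpace X] {f : X → ℝ}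
    (hf : LowerSemicontinuous f) {c : ℝ} (hc : ∀ x, c ≤ f x) :
    ∃ g : ℕ → X →ᵇ ℝ, ∀ x, IsLUB (range fun n => g n x) (f x) := by
  choose g hle hge using fun r : ℚ => hf.exists_boundedContinuous_le_of_lt hc r
  obtain ⟨e, he⟩ := exists_surjective_nat (ℚ × ℕ)
  refine ⟨fun n => g (e n).1 (e n).2, fun x => ⟨?_, fun b hb => le_of_forall_lt fun a ha => ?_⟩⟩
  · rintro _ ⟨n, rfl⟩
    exact hle _ _ x
  · obtain ⟨q, haq, hqf⟩ := exists_rat_btwn ha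
    obtain ⟨m, hm⟩ := hge q x hqf
    obtain ⟨n, hn⟩ := he (q, m)
    calc a < q := haq
      _ ≤ g q m x := hm
      _ ≤ b := hb ⟨n, by simp [hn]⟩

theorem LowerSemicontinuous.exists_monotone_tendsto_boundedContinuous [PerfectlyNormalSpace X]
    {f : X → ℝ} (hf : LowerSemicontinuous f) (hbdd : BddBelow (range f)) :
    ∃ s : ℕ → X →ᵇ ℝ, Monotone s ∧ ∀ x, Tendsto (fun n => s n x) atTop (𝓝 (f x)) := by
  obtain ⟨c, hc⟩ := hbdd
  obtain ⟨g, hg⟩ := hf.exists_seq_boundedContinuous_isLUB fun x => hc ⟨x, rfl⟩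
  refine ⟨partialSups g, (partialSups g).monotone, fun x => ?_⟩
  simp only [BoundedContinuousFunction.partialSups_apply]
  exact tendsto_atTop_isLUB (partialSups _).monotone (isLUB_range_partialSups_iff.2 (hg x))

theorem UpperSemicontinuous.exists_antitone_tendsto_boundedContinuous [PerfectlyNormalSpace X]
    {f : X → ℝ} (hf : UpperSemicontinuous f) (hbdd : BddAbove (range f)) :
    ∃ s : ℕ → X →ᵇ ℝ, Antitone s ∧ ∀ x, Tendsto (fun n => s n x) atTop (𝓝 (f x)) := by
  obtain ⟨c, hc⟩ := hbdd
  have hbdd_neg : BddBelow (range (-f)) :=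
    ⟨-c, by rintro _ ⟨x, rfl⟩; exact neg_le_neg (hc ⟨x, rfl⟩)⟩
  obtain ⟨s, hs, hlim⟩ := hf.neg.exists_monotone_tendsto_boundedContinuous hbdd_neg
  exact ⟨fun n => -s n, fun m n h => neg_le_neg (hs h), fun x => by simpa using (hlim x).neg⟩

lemma BoundedContinuousFunction.coe_mem_Cb (g : X →ᵇ ℝ) : ⇑g ∈ Cb X :=
  ⟨g.continuous, ‖g‖, g.norm_coe_le_norm⟩

lemma Cb_subset_USCb : Cb X ⊆ USCb X :=
  fun _ hg => ⟨fun _ => isOpen_lt hg.1 continuous_const, hg.2⟩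

lemma exists_antitone_tendsto_of_mem_USCb [PerfectlyNormalSpace X] {f : X → ℝ} (hf : f ∈ USCb X) :
    ∃ s : ℕ → X → ℝ, (∀ n, s n ∈ Cb X) ∧ (∀ n, s (n + 1) ≤ s n) ∧
      ∀ x, Tendsto (fun n => s n x) atTop (𝓝 (f x)) := by
  obtain ⟨hopen, M, hM⟩ := hf
  have hbdd : BddAbove (range f) := ⟨M, by rintro _ ⟨x, rfl⟩; exact (abs_le.1 (hM x)).2⟩
  obtain ⟨s, hs, hlim⟩ := (upperSemicontinuous_iff_isOpen_preimage.2 hopen)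
    |>.exists_antitone_tendsto_boundedContinuous hbdd
  exact ⟨fun n => s n, fun n => (s n).coe_mem_Cb, fun n => hs n.le_succ, hlim⟩

end

/-- If `X` is perfectly normal, then every bounded upper semicontinuous
`f : X → ℝ` is the pointwise limit of a non-increasing sequence of bounded continuous
functions; in particular `C*(X)` is sequentially dense in `⟨USC*(X), τ_p⟩`
(the product topology on `ℝ^X` is the default instance). -/
theorem statement15 {X : Type*} [TopologicalSpace X] [PerfectlyNormalSpace X] :
    (∀ f ∈ USCb X, ∃ s : ℕ → X → ℝ, (∀ n, s n ∈ Cb X) ∧ (∀ n, s (n + 1) ≤ s n) ∧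
      ∀ x : X, Filter.Tendsto (fun n => s n x) Filter.atTop (nhds (f x))) ∧
    Cb X ∈ SFam (Pi.topologicalSpace : TopologicalSpace (X → ℝ)) (USCb X) := by
  refine ⟨fun f hf => exists_antitone_tendsto_of_mem_USCb hf, Cb_subset_USCb, fun f hf => ?_⟩
  obtain ⟨s, hs, -, hlim⟩ := exists_antitone_tendsto_of_mem_USCb hf
  exact ⟨s, hs, tendsto_pi_nhds.2 hlim⟩
end
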